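/- arXiv:1309.2767 — 3 statements merged into one kernel-verified Lean document; each statement's English description precedes it below -/
import Mathlib

section
/- Let ψ : ℝⁿ → ℝ be a convex function with ∫ e^{-ψ} = 1 and barycenter of e^{-ψ(x)}dx at the origin, so that ψ(0) ≤ n + inf ψ. Define K(ψ) = {x : ψ(x) ≤ 2n + inf ψ} and let ‖x‖_ψ be the Minkowski functional of K(ψ). Then for all x ∈ ℝⁿ, ψ(x) ≥ n‖x‖_ψ + ψ(0) − 2n. -/
/-! Integrability of `e^{-ψ}` makes the convex function `ψ` bounded below, so `inf ψ` really is a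
lower bound of `ψ`. When `‖x‖_ψ ≤ 1` the bound follows from `ψ ≥ inf ψ ≥ ψ(0) - n`. Otherwise, if
`1 < λ < ‖x‖_ψ` then `x/λ ∉ K(ψ)`, and convexity along the segment from `0` to `x` gives
`ψ(x) ≥ ψ(0) + λ (2n + inf ψ - ψ(0)) ≥ ψ(0) + λ n`; letting `λ → ‖x‖_ψ` finishes the proof. -/

open MeasureTheory Real Metric Set Filter Topology

section Gauge

variable {E : Type*} [AddCommGroup E] [Module ℝ E] {f : E → ℝ} {t : ℝ}

theorem ConvexOn.mul_sub_lt_of_lt_inv_smul (hf : ConvexOn ℝ univ f) (x : E)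
    {l : ℝ} (hl : 1 < l) (hx : t < f (l⁻¹ • x)) : l * (t - f 0) < f x - f 0 := by
  have hl0 : 0 < l := one_pos.trans hl
  have hseg : f (l⁻¹ • x) ≤ l⁻¹ * f x + (1 - l⁻¹) * f 0 := by
    simpa using hf.2 (mem_univ x) (mem_univ 0) (inv_nonneg.2 hl0.le)
      (sub_nonneg.2 (inv_le_one_of_one_le₀ hl.le)) (add_sub_cancel _ _)
  have h := mul_lt_mul_of_pos_left (hx.trans_le hseg) hl0
  field_simp at h
  linarith

theorem ConvexOn.add_gauge_sublevel_mul_le (hf : ConvexOn ℝ univ f) {x : E}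
    (hx : 1 < gauge {y | f y ≤ t} x) : f 0 + gauge {y | f y ≤ t} x * (t - f 0) ≤ f x := by
  set g := gauge {y | f y ≤ t} x
  have hbound : ∀ l ∈ Ioo 1 g, l * (t - f 0) ≤ f x - f 0 := by
    rintro l ⟨hl1, hlg⟩
    refine (hf.mul_sub_lt_of_lt_inv_smul x hl1 ?_).le
    by_contra! hmem
    have : g ≤ l := gauge_le_of_mem (one_pos.trans hl1).le
      ((mem_smul_set_iff_inv_smul_mem₀ (one_pos.trans hl1).ne' _ _).2 hmem)
    linarith
  have hlim : Tendsto (fun l => l * (t - f 0)) (𝓝[<] g) (𝓝 (g * (t - f 0))) :=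
    ((continuous_id.mul continuous_const).tendsto g).mono_left nhdsWithin_le_nhds
  linarith [le_of_tendsto hlim (eventually_of_mem (Ioo_mem_nhdsLT hx) hbound)]

end Gauge

theorem ConvexOn.bddBelow_of_integrable_exp_neg {E : Type*} [NormedAddCommGroup E]
    [NormedSpace ℝ E] [FiniteDimensional ℝ E] [MeasurableSpace E] [BorelSpace E]
    {μ : Measure E} [μ.IsAddHaarMeasure] {f : E → ℝ} (hf : ConvexOn ℝ univ f)
    (hint : Integrable (fun x => exp (-f x)) μ) : BddBelow (range f) := by
  have hcont : Continuous f := continuousOn_univ.mp (hf.continuousOn isOpen_univ)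
  obtain ⟨z, -, hz⟩ := (isCompact_closedBall (0 : E) 2).exists_isMaxOn
    (nonempty_closedBall.2 zero_le_two) hcont.continuousOn
  set V := μ.real (ball 0 1)
  have hV : 0 < V := ENNReal.toReal_pos (measure_ball_pos μ 0 one_pos).ne' measure_ball_lt_top.ne
  have hmass : ∀ y, exp (-(f y + f z) / 2) * V ≤ ∫ x, exp (-f x) ∂μ := by
    intro y
    -- each `u` in this ball is the midpoint of `y` and a point of `closedBall 0 2`, where `f ≤ f z`
    have hmid : ∀ u ∈ ball ((2 : ℝ)⁻¹ • y) 1, exp (-(f y + f z) / 2) ≤ exp (-f u) := by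
      intro u hu
      have hfar : 2 • u - y ∈ closedBall (0 : E) 2 := by
        rw [mem_closedBall_zero_iff, show 2 • u - y = (2 : ℝ) • (u - (2 : ℝ)⁻¹ • y) by module,
          norm_smul, Real.norm_two]
        linarith [mem_ball_iff_norm.1 hu]
      have hconv := hf.2 (mem_univ y) (mem_univ (2 • u - y)) (by norm_num : (0 : ℝ) ≤ 1 / 2)
        (by norm_num : (0 : ℝ) ≤ 1 / 2) (by norm_num)
      rw [show (1 / 2 : ℝ) • y + (1 / 2 : ℝ) • (2 • u - y) = u by module, smul_eq_mul,
        smul_eq_mul] at hconv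
      have : f (2 • u - y) ≤ f z := hz hfar
      exact exp_le_exp.2 (by linarith)
    calc exp (-(f y + f z) / 2) * V
        = μ.real (ball ((2 : ℝ)⁻¹ • y) 1) • exp (-(f y + f z) / 2) := by
          rw [Measure.addHaar_real_ball_center, smul_eq_mul, mul_comm]
      _ ≤ ∫ x in ball ((2 : ℝ)⁻¹ • y) 1, exp (-f x) ∂μ :=
          setIntegral_ge_of_const_le measurableSet_ball measure_ball_lt_top.ne hmid
            hint.integrableOn
      _ ≤ ∫ x, exp (-f x) ∂μ :=
          setIntegral_le_integral hint (Eventually.of_forall fun _ => (exp_pos _).le)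
  refine ⟨-f z - 2 * log ((∫ x, exp (-f x) ∂μ) / V), ?_⟩
  rintro _ ⟨y, rfl⟩
  have hle : exp (-(f y + f z) / 2) ≤ (∫ x, exp (-f x) ∂μ) / V := (le_div_iff₀ hV).2 (hmass y)
  linarith [(le_log_iff_exp_le ((exp_pos _).trans_le hle)).2 hle]

theorem stmt_0_general (n : ℕ) (ψ : EuclideanSpace ℝ (Fin n) → ℝ)
    (hconv : ConvexOn ℝ Set.univ ψ)
    (hint : ∫ x, Real.exp (-ψ x) = 1)
    (hfrad : ψ 0 ≤ n + ⨅ y, ψ y) (x : EuclideanSpace ℝ (Fin n)) :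
    ψ x ≥ n * gauge {y | ψ y ≤ 2 * n + ⨅ z, ψ z} x + ψ 0 - 2 * n := by
  have hbdd : BddBelow (range ψ) := hconv.bddBelow_of_integrable_exp_neg
    (μ := volume) (Integrable.of_integral_ne_zero (hint ▸ one_ne_zero))
  set g := gauge {y | ψ y ≤ 2 * n + ⨅ z, ψ z} x
  rcases le_or_gt g 1 with hg | hg
  · have : (n : ℝ) * g ≤ n := mul_le_of_le_one_right n.cast_nonneg hg
    linarith [ciInf_le hbdd x]
  · have hgrowth := hconv.add_gauge_sublevel_mul_le hg
    nlinarith [mul_le_mul_of_nonneg_left (by linarith : (n : ℝ) ≤ 2 * n + (⨅ z, ψ z) - ψ 0)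
      (gauge_nonneg x : 0 ≤ g)]

theorem stmt_0 (n : ℕ) (ψ : EuclideanSpace ℝ (Fin n) → ℝ)
    (hconv : ConvexOn ℝ Set.univ ψ)
    (hint : ∫ x, Real.exp (-ψ x) = 1)
    (hbar : ∫ x, Real.exp (-ψ x) • x = (0 : EuclideanSpace ℝ (Fin n)))
    (hfrad : ψ 0 ≤ n + ⨅ y, ψ y) (x : EuclideanSpace ℝ (Fin n)) :
    ψ x ≥ n * gauge {y | ψ y ≤ 2 * n + ⨅ z, ψ z} x + ψ 0 - 2 * n :=
  stmt_0_general n ψ hconv hint hfrad x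
end

section
/- Let ψ : ℝⁿ → ℝ be a convex function such that the origin lies in the interior of K(ψ) = {x : ψ(x) ≤ 2n + inf ψ}, and suppose ψ(0) ≤ n + inf ψ. If x ∉ K(ψ), then ψ(x) ≥ ψ(0) + n‖x‖_ψ, where ‖·‖_ψ is the Minkowski functional of K(ψ). -/
theorem stmt_1 (n : ℕ) (ψ : EuclideanSpace ℝ (Fin n) → ℝ)
    (hconv : ConvexOn ℝ Set.univ ψ)
    (hmem : (0 : EuclideanSpace ℝ (Fin n)) ∈ interior {y | ψ y ≤ 2 * n + ⨅ z, ψ z})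
    (hfrad : ψ 0 ≤ n + ⨅ y, ψ y)
    (x : EuclideanSpace ℝ (Fin n)) (hx : x ∉ {y | ψ y ≤ 2 * n + ⨅ z, ψ z}) :
    ψ x ≥ ψ 0 + n * gauge {y | ψ y ≤ 2 * n + ⨅ z, ψ z} x := by
  set m : ℝ := ⨅ z, ψ z with hm
  set K : Set (EuclideanSpace ℝ (Fin n)) := {y | ψ y ≤ 2 * n + m} with hKdef
  have hKconv : Convex ℝ K := by
    have := hconv.convex_le (2 * n + m)
    simpa [hKdef] using this
  have hK0 : (0 : EuclideanSpace ℝ (Fin n)) ∈ K := interior_subset hmem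
  have habs : Absorbent ℝ K := absorbent_nhds_zero (mem_interior_iff_mem_nhds.mp hmem)
  set g : ℝ := gauge K x with hg
  have hxK : 2 * n + m < ψ x := not_le.mp hx
  have hg1 : 1 ≤ g := by
    by_contra h
    exact hx (gauge_lt_one_subset_self hKconv hK0 habs (by simpa [hg] using not_le.mp h))
  have hgpos : 0 < g := lt_of_lt_of_le one_pos hg1
  -- key inequality for s ∈ (1, g]
  have hkey : ∀ s : ℝ, 1 < s → s ≤ g → ψ 0 + n * (g / s) ≤ ψ x := by
    intro s hs1 hsg
    have hspos : 0 < s := lt_trans one_pos hs1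
    set t : ℝ := s / g with hT
    have ht0 : 0 < t := div_pos hspos hgpos
    have ht1 : t ≤ 1 := (div_le_one hgpos).mpr hsg
    have hgauge : gauge K (t • x) = s := by
      rw [gauge_smul_of_nonneg ht0.le, smul_eq_mul, ← hg, hT]
      field_simp
    have hyK : t • x ∉ K := by
      intro hmemy
      have := gauge_le_one_of_mem hmemy
      rw [hgauge] at this
      linarith
    have hylb : 2 * n + m < ψ (t • x) := not_le.mp hyK
    have hconvineq : ψ (t • x) ≤ t * ψ x + (1 - t) * ψ 0 := by
      have := hconv.2 (Set.mem_univ x) (Set.mem_univ (0 : EuclideanSpace ℝ (Fin n)))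
        ht0.le (by linarith : (0:ℝ) ≤ 1 - t) (by ring)
      simpa using this
    have hn : (n : ℝ) < t * (ψ x - ψ 0) := by nlinarith
    have htg : g / s = 1 / t := by rw [hT]; field_simp
    rw [htg]
    rw [mul_one_div, ← sub_nonneg]
    have : (n : ℝ) / t ≤ ψ x - ψ 0 := by
      rw [div_le_iff₀ ht0]
      nlinarith
    linarith
  rcases eq_or_lt_of_le hg1 with hgeq | hglt
  · -- g = 1
    have : ψ 0 + (n : ℝ) * g ≤ 2 * n + m := by
      rw [← hgeq]; linarith
    linarith
  · -- g > 1: take limit s → 1⁺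
    have htend : Filter.Tendsto (fun s : ℝ => ψ 0 + n * (g / s)) (nhdsWithin 1 (Set.Ioi 1))
        (nhds (ψ 0 + n * (g / 1))) := by
      apply Filter.Tendsto.mono_left _ nhdsWithin_le_nhds
      exact (tendsto_const_nhds.add (tendsto_const_nhds.mul
        (tendsto_const_nhds.div Filter.tendsto_id one_ne_zero)))
    have hev : ∀ᶠ s in nhdsWithin (1:ℝ) (Set.Ioi 1), ψ 0 + n * (g / s) ≤ ψ x := by
      filter_upwards [Ioc_mem_nhdsGT_of_mem (Set.mem_Ico.mpr ⟨le_refl 1, hglt⟩)] with s hs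
      exact hkey s hs.1 hs.2
    have := le_of_tendsto htend hev
    simpa using this
end

section
/- Let ψ, ψ₁, ψ₂, … : ℝⁿ → ℝ be convex functions with ψ_ℓ → ψ pointwise, and suppose there exist α, β, L, γ > 0 such that α|x| − β ≤ ψ_ℓ(x) ≤ L|x| + γ for all ℓ and x. If b : ℝⁿ → ℝ is continuous and bounded, then ∫ b(∇ψ_ℓ(x)) e^{-ψ_ℓ(x)} dx → ∫ b(∇ψ(x)) e^{-ψ(x)} dx as ℓ → ∞. -/
/-!
The growth bound `ψ_ℓ x ≤ L‖x‖ + γ` makes every convex `ψ_ℓ`, and hence the pointwise limit `ψ`,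
`L`-Lipschitz. By Rademacher's theorem all of them are differentiable almost everywhere, with
gradients in the closed ball of radius `L`. At a common point of differentiability `x`, every
subsequential limit of `∇ψ_ℓ x` satisfies the subgradient inequality of `ψ` at `x` (pass to the
limit in that of `ψ_ℓ`), so it equals `∇ψ x`. Hence the integrands converge almost everywhere, and
the lower bound `α‖x‖ - β ≤ ψ_ℓ x` gives the integrable majorant `sup |b| · exp (β - α‖x‖)`.
-/

open MeasureTheory Filter Set
open scoped RealInnerProductSpace Topology

section Convex

variable {E : Type*} [NormedAddCommGroup E] [NormedSpace ℝ E] {f : E → ℝ}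

theorem ConvexOn.sub_le_mul_norm_sub_of_le_mul_norm_add (hf : ConvexOn ℝ univ f) {L γ : ℝ}
    (hL : 0 ≤ L) (hub : ∀ z, f z ≤ L * ‖z‖ + γ) (x y : E) : f y - f x ≤ L * ‖y - x‖ := by
  -- Convexity on the segment from `x` to `x + t • (y - x)`, which contains `y`; then `t → ∞`.
  have key : ∀ t : ℝ, 1 ≤ t → f y ≤ f x + L * ‖y - x‖ + (L * ‖x‖ + γ - f x) / t := by
    intro t ht
    have ht0 : 0 < t := by linarith
    set z := x + t • (y - x)
    have hy : (1 - t⁻¹) • x + t⁻¹ • z = y := by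
      simp only [z, smul_add, smul_smul, inv_mul_cancel₀ ht0.ne']
      module
    have hcvx := hf.2 (mem_univ x) (mem_univ z) (by simpa using inv_le_one_of_one_le₀ ht)
      (inv_nonneg.2 ht0.le) (sub_add_cancel 1 t⁻¹)
    rw [hy, smul_eq_mul, smul_eq_mul] at hcvx
    have hz : f z ≤ L * ‖x‖ + t * (L * ‖y - x‖) + γ := by
      calc f z ≤ L * ‖z‖ + γ := hub z
        _ ≤ L * (‖x‖ + t * ‖y - x‖) + γ := by
          gcongr
          simpa [z, norm_smul, abs_of_pos ht0] using norm_add_le x (t • (y - x))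
        _ = _ := by ring
    have := mul_le_mul_of_nonneg_left hz (inv_nonneg.2 ht0.le)
    have h : f x + L * ‖y - x‖ + (L * ‖x‖ + γ - f x) / t
        = (1 - t⁻¹) * f x + t⁻¹ * (L * ‖x‖ + t * (L * ‖y - x‖) + γ) := by
      field_simp; ring
    linarith
  have hlim : Tendsto (fun t : ℝ => f x + L * ‖y - x‖ + (L * ‖x‖ + γ - f x) / t) atTop
      (𝓝 (f x + L * ‖y - x‖)) := by
    simpa using tendsto_const_nhds.add (tendsto_const_nhds.div_atTop (tendsto_id (α := ℝ)))
  linarith [ge_of_tendsto hlim (eventually_atTop.2 ⟨1, key⟩)]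

theorem ConvexOn.lipschitzWith_of_le_mul_norm_add (hf : ConvexOn ℝ univ f) {L γ : ℝ}
    (hL : 0 ≤ L) (hub : ∀ z, f z ≤ L * ‖z‖ + γ) : LipschitzWith L.toNNReal f := by
  refine LipschitzWith.of_dist_le_mul fun x y => ?_
  rw [Real.dist_eq, Real.coe_toNNReal _ hL, dist_eq_norm, abs_sub_le_iff]
  exact ⟨hf.sub_le_mul_norm_sub_of_le_mul_norm_add hL hub y x,
    norm_sub_rev x y ▸ hf.sub_le_mul_norm_sub_of_le_mul_norm_add hL hub x y⟩

theorem ConvexOn.add_fderiv_sub_le (hf : ConvexOn ℝ univ f) {f' : E →L[ℝ] ℝ} {x : E}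
    (hd : HasFDerivAt f f' x) (y : E) : f x + f' (y - x) ≤ f y := by
  set g : ℝ →ᵃ[ℝ] E := AffineMap.lineMap x y
  have hconv : ConvexOn ℝ univ (f ∘ g) := hf.comp_affineMap g
  have hderiv : HasDerivAt (f ∘ g) (f' (y - x)) 0 := by
    have hg : HasDerivAt g (y - x) 0 := AffineMap.hasDerivAt_lineMap
    exact (by simpa [g] using hd : HasFDerivAt f f' (g 0)).comp_hasDerivAt 0 hg
  have := hconv.le_slope_of_hasDerivAt (mem_univ 0) (mem_univ 1) zero_lt_one hderiv
  simp only [slope_def_field, Function.comp_apply, g, AffineMap.lineMap_apply_zero,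
    AffineMap.lineMap_apply_one, sub_zero, div_one] at this
  linarith

end Convex

section Gradient

variable {E : Type*} [NormedAddCommGroup E] [InnerProductSpace ℝ E] [CompleteSpace E]
  {f : E → ℝ} {x : E}

theorem ConvexOn.add_inner_gradient_le (hf : ConvexOn ℝ univ f) (hd : DifferentiableAt ℝ f x)
    (y : E) : f x + ⟪gradient f x, y - x⟫ ≤ f y := by
  simpa using hf.add_fderiv_sub_le hd.hasGradientAt.hasFDerivAt y

theorem eq_gradient_of_forall_add_inner_le (hd : DifferentiableAt ℝ f x) {g : E}
    (hg : ∀ y, f x + ⟪g, y - x⟫ ≤ f y) : g = gradient f x := by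
  have hmin : IsLocalMin (fun y => f y - ⟪g, y - x⟫) x :=
    Eventually.of_forall fun y => by simpa using sub_le_sub_right (hg y) ⟪g, y - x⟫
  have hderiv : HasFDerivAt (fun y => f y - ⟪g, y - x⟫)
      (fderiv ℝ f x - InnerProductSpace.toDual ℝ E g) x := by
    refine hd.hasFDerivAt.sub ?_
    simp_rw [inner_sub_right]
    exact ((InnerProductSpace.toDual ℝ E g).hasFDerivAt).sub_const _
  have := hmin.hasFDerivAt_eq_zero hderiv
  rw [sub_eq_zero] at this
  simp [gradient, this]

theorem norm_gradient_le_of_lipschitzWith {K : NNReal} (hf : LipschitzWith K f) (x : E) :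
    ‖gradient f x‖ ≤ K := by
  simpa [gradient] using norm_fderiv_le_of_lipschitz ℝ hf (x₀ := x)

end Gradient

theorem LipschitzWith.of_tendsto {α β ι : Type*} [PseudoMetricSpace α] [PseudoMetricSpace β]
    {l : Filter ι} [l.NeBot] {F : ι → α → β} {f : α → β} {K : NNReal}
    (hF : ∀ i, LipschitzWith K (F i)) (hlim : ∀ x, Tendsto (F · x) l (𝓝 (f x))) :
    LipschitzWith K f :=
  LipschitzWith.of_dist_le_mul fun x y =>
    le_of_tendsto ((hlim x).dist (hlim y)) (Eventually.of_forall fun i => (hF i).dist_le_mul x y)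

theorem tendsto_gradient_of_convexOn {E : Type*} [NormedAddCommGroup E] [InnerProductSpace ℝ E]
    [FiniteDimensional ℝ E] {f : E → ℝ} {F : ℕ → E → ℝ} {K : NNReal} {x : E}
    (hF : ∀ i, ConvexOn ℝ univ (F i)) (hlip : ∀ i, LipschitzWith K (F i))
    (hlim : ∀ y, Tendsto (F · y) atTop (𝓝 (f y)))
    (hd : DifferentiableAt ℝ f x) (hdF : ∀ i, DifferentiableAt ℝ (F i) x) :
    Tendsto (fun i => gradient (F i) x) atTop (𝓝 (gradient f x)) := by
  refine tendsto_of_subseq_tendsto fun ns hns => ?_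
  have hmem : ∀ i, gradient (F (ns i)) x ∈ Metric.closedBall (0 : E) K := fun i => by
    simpa using norm_gradient_le_of_lipschitzWith (hlip (ns i)) x
  obtain ⟨g, -, φ, hφ, hg⟩ := (isCompact_closedBall (0 : E) K).tendsto_subseq hmem
  refine ⟨φ, ?_⟩
  have hnsφ : Tendsto (ns ∘ φ) atTop atTop := hns.comp hφ.tendsto_atTop
  suffices g = gradient f x from this ▸ hg
  refine eq_gradient_of_forall_add_inner_le hd fun y => ?_
  exact le_of_tendsto_of_tendsto' (((hlim x).comp hnsφ).add (hg.inner tendsto_const_nhds))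
    ((hlim y).comp hnsφ) fun i => (hF _).add_inner_gradient_le (hdF _) y

theorem measurable_gradient {E : Type*} [NormedAddCommGroup E] [InnerProductSpace ℝ E]
    [CompleteSpace E] [MeasurableSpace E] [BorelSpace E] (f : E → ℝ) :
    Measurable (gradient f) :=
  (InnerProductSpace.toDual ℝ E).symm.continuous.measurable.comp (measurable_fderiv ℝ f)

theorem integrable_exp_neg_mul_norm {E : Type*} [NormedAddCommGroup E] [NormedSpace ℝ E]
    [FiniteDimensional ℝ E] [MeasurableSpace E] [BorelSpace E] (μ : Measure E)
    [μ.IsAddHaarMeasure] {c : ℝ} (hc : 0 < c) :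
    Integrable (fun x : E => Real.exp (-(c * ‖x‖))) μ := by
  rcases subsingleton_or_nontrivial E with hE | hE
  · exact Integrable.of_bound (by fun_prop) 1
      (Eventually.of_forall fun x => by simp [Subsingleton.elim x 0])
  · refine (integrable_fun_norm_addHaar μ (f := fun r => Real.exp (-(c * r)))).2 ?_
    refine (integrableOn_rpow_mul_exp_neg_mul_rpow (s := (Module.finrank ℝ E - 1 : ℕ))
      (neg_one_lt_zero.trans_le (Nat.cast_nonneg _)) one_pos hc).congr_fun (fun r _ => ?_)
      measurableSet_Ioi
    simp [Real.rpow_natCast]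

theorem stmt_19_general (n : ℕ) (ψ : EuclideanSpace ℝ (Fin n) → ℝ)
    (ψs : ℕ → EuclideanSpace ℝ (Fin n) → ℝ)
    (hψs : ∀ l, ConvexOn ℝ Set.univ (ψs l))
    (hptwise : ∀ x, Tendsto (fun l => ψs l x) atTop (nhds (ψ x)))
    (α β L γ : ℝ) (hα : 0 < α) (hL : 0 < L)
    (hbounds : ∀ l, ∀ x : EuclideanSpace ℝ (Fin n),
      α * ‖x‖ - β ≤ ψs l x ∧ ψs l x ≤ L * ‖x‖ + γ)
    (b : EuclideanSpace ℝ (Fin n) → ℝ) (hb : Continuous b)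
    (hbbdd : ∃ Cb : ℝ, ∀ y, |b y| ≤ Cb) :
    Tendsto (fun l => ∫ x, b (gradient (ψs l) x) * Real.exp (-(ψs l x)))
      atTop (nhds (∫ x, b (gradient ψ x) * Real.exp (-ψ x))) := by
  obtain ⟨Cb, hCb⟩ := hbbdd
  have hlip : ∀ l, LipschitzWith L.toNNReal (ψs l) := fun l =>
    (hψs l).lipschitzWith_of_le_mul_norm_add hL.le fun z => (hbounds l z).2
  have hlipψ : LipschitzWith L.toNNReal ψ := LipschitzWith.of_tendsto hlip hptwise
  have hdiff : ∀ᵐ x, DifferentiableAt ℝ ψ x ∧ ∀ l, DifferentiableAt ℝ (ψs l) x := by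
    filter_upwards [hlipψ.ae_differentiableAt, ae_all_iff.2 fun l => (hlip l).ae_differentiableAt]
      with x hψx hψsx using ⟨hψx, hψsx⟩
  refine tendsto_integral_of_dominated_convergence (fun x => Cb * Real.exp (β - α * ‖x‖))
    (fun l => ?_) ?_ (fun l => ?_) ?_
  · exact ((hb.measurable.comp (measurable_gradient _)).mul
      (hlip l).continuous.neg.rexp.measurable).aestronglyMeasurable
  · refine ((integrable_exp_neg_mul_norm volume hα).const_mul (Cb * Real.exp β)).congr
      (Eventually.of_forall fun x => ?_)
    simp only [sub_eq_add_neg, Real.exp_add]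
    ring
  · refine Eventually.of_forall fun x => ?_
    rw [Real.norm_eq_abs, abs_mul, Real.abs_exp]
    exact mul_le_mul (hCb _) (Real.exp_le_exp.2 (by linarith [(hbounds l x).1]))
      (Real.exp_pos _).le ((abs_nonneg _).trans (hCb 0))
  · filter_upwards [hdiff] with x ⟨hψx, hψsx⟩
    exact ((hb.tendsto _).comp (tendsto_gradient_of_convexOn hψs hlip hptwise hψx hψsx)).mul
      ((Real.continuous_exp.tendsto _).comp (hptwise x).neg)

theorem stmt_19 (n : ℕ) (ψ : EuclideanSpace ℝ (Fin n) → ℝ)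
    (ψs : ℕ → EuclideanSpace ℝ (Fin n) → ℝ)
    (hψ : ConvexOn ℝ Set.univ ψ) (hψs : ∀ l, ConvexOn ℝ Set.univ (ψs l))
    (hptwise : ∀ x, Tendsto (fun l => ψs l x) atTop (nhds (ψ x)))
    (α β L γ : ℝ) (hα : 0 < α) (hβ : 0 < β) (hL : 0 < L) (hγ : 0 < γ)
    (hbounds : ∀ l, ∀ x : EuclideanSpace ℝ (Fin n),
      α * ‖x‖ - β ≤ ψs l x ∧ ψs l x ≤ L * ‖x‖ + γ)
    (b : EuclideanSpace ℝ (Fin n) → ℝ) (hb : Continuous b)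
    (hbbdd : ∃ Cb : ℝ, ∀ y, |b y| ≤ Cb) :
    Tendsto (fun l => ∫ x, b (gradient (ψs l) x) * Real.exp (-(ψs l x)))
      atTop (nhds (∫ x, b (gradient ψ x) * Real.exp (-ψ x))) :=
  stmt_19_general n ψ ψs hψs hptwise α β L γ hα hL hbounds b hb hbbdd
end
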